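/- Let α ∈ F⊗F be central. For each pair i < j, each α_{i,j} is central in F^{⊗d}, so the product α_w := Π_{(i,j)∈Inv(w)} α_{i,j} is well-defined for w ∈ S_d (with α_id := 1). Then for any reduced expression w = s_{i₁}⋯s_{i_N} (i.e. N = |Inv(w)|), writing α_k := α_{k,k+1}: α_w = α_{i_N} · σ_{i_N}(α_{i_{N−1}}) · (σ_{i_N}σ_{i_{N−1}})(α_{i_{N−2}}) ⋯ (σ_{i_N}⋯σ_{i_2})(α_{i_1}), and α_{w^{-1}} = α_{i_1} · σ_{i_1}(α_{i_2}) ⋯ (σ_{i_1}⋯σ_{i_{N−1}})(α_{i_N}). -/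

import Mathlib

/-!
For central `α ∈ F⊗F`, the placements `α_{i,j} ∈ F^{⊗d}` are central, and for any
reduced expression `w = s_{i₁}⋯s_{i_N}` the inversion products `α_w` and `α_{w⁻¹}`
are given by the twisted ordered product formulas.
-/

open scoped TensorProduct
open PiTensorProduct

variable (k F : Type*) [Field k] [Ring F] [Algebra k F] (d : ℕ)

/-- The `d`-fold tensor power `F^{⊗d}`. -/
abbrev TPow := ⨂[k] (_ : Fin d), F

/-- Insertion of `F` into the `j`-th tensor slot of `F^{⊗d}` (with `1` elsewhere). -/
noncomputable def ins (j : Fin d) : F →ₗ[k] TPow k F d where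
  toFun a := tprod k (Function.update (fun _ => (1 : F)) j a)
  map_add' a b := by
    simpa using MultilinearMap.map_update_add (tprod k) (fun _ => (1 : F)) j a b
  map_smul' c a := by
    simpa using MultilinearMap.map_update_smul (tprod k) (fun _ => (1 : F)) j c a

/-- `Y_{i,j}`: the placement of `Y ∈ F⊗F` with its legs in tensor slots `i` and `j`. -/
noncomputable def place (i j : Fin d) : F ⊗[k] F →ₗ[k] TPow k F d :=
  TensorProduct.lift
    ((LinearMap.mul k (TPow k F d)).compl₁₂ (ins k F d i) (ins k F d j))

/-- The place-permutation action of the simple transposition `s_i` on `F^{⊗d}`. -/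
noncomputable def sigmaI (i : Fin (d - 1)) : TPow k F d →ₗ[k] TPow k F d :=
  (PiTensorProduct.reindex k (fun _ => F)
      (Equiv.swap (⟨i.1, by omega⟩ : Fin d) ⟨i.1 + 1, by omega⟩)).toLinearMap

/-- The simple transposition `s_i = (i, i+1) ∈ S_d`. -/
def swPerm (i : Fin (d - 1)) : Equiv.Perm (Fin d) :=
  Equiv.swap (⟨i.1, by omega⟩ : Fin d) ⟨i.1 + 1, by omega⟩

/-- The number of inversions (Coxeter length) of a permutation of `Fin d`. -/
noncomputable def invCount (w : Equiv.Perm (Fin d)) : ℕ :=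
  (Finset.univ.filter fun p : Fin d × Fin d => p.1 < p.2 ∧ w p.2 < w p.1).card

/-- `L` is a reduced expression for `w`. -/
def IsReducedWord (L : List (Fin (d - 1))) (w : Equiv.Perm (Fin d)) : Prop :=
  (L.map (swPerm d)).prod = w ∧ L.length = invCount d w

/-- The inversion product `α_w = ∏_{(i,j) ∈ Inv(w)} α_{i,j}`, computed as an ordered
product over the lexicographically ordered pairs (the factors commute since `α` is
central, so this is the product in any order). -/
noncomputable def alphaW (α : F ⊗[k] F) (w : Equiv.Perm (Fin d)) : TPow k F d :=
  ((List.finRange d).map fun i =>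
    ((List.finRange d).map fun j =>
      if i < j ∧ w j < w i then place k F d i j α else 1).prod).prod

/-- `α_{i_N} · σ_{i_N}(α_{i_{N−1}}) ⋯ (σ_{i_N}⋯σ_{i_2})(α_{i_1})`
for the word `L = [i₁,…,i_N]`. -/
noncomputable def alphaWordR (α : F ⊗[k] F) (L : List (Fin (d - 1))) : TPow k F d :=
  (((List.finRange L.length).reverse).map fun p =>
    (L.drop (p.1 + 1)).foldl (fun x j => sigmaI k F d j x)
      (place k F d ⟨(L.get p).1, by omega⟩ ⟨(L.get p).1 + 1, by omega⟩ α)).prod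

/-- `α_{i_1} · σ_{i_1}(α_{i_2}) ⋯ (σ_{i_1}⋯σ_{i_{N−1}})(α_{i_N})`
for the word `L = [i₁,…,i_N]`. -/
noncomputable def alphaWordL (α : F ⊗[k] F) (L : List (Fin (d - 1))) : TPow k F d :=
  ((List.finRange L.length).map fun p =>
    (L.take p.1).foldr (fun j x => sigmaI k F d j x)
      (place k F d ⟨(L.get p).1, by omega⟩ ⟨(L.get p).1 + 1, by omega⟩ α)).prod

section AuxLemmas

variable {k F : Type*} [Field k] [Ring F] [Algebra k F] {d : ℕ}

open PiTensorProduct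

/-- Left endpoint of the simple transposition `s_i`, as an element of `Fin d`. -/
def fa (i : Fin (d - 1)) : Fin d := ⟨i.1, by omega⟩

/-- Right endpoint of the simple transposition `s_i`, as an element of `Fin d`. -/
def fb (i : Fin (d - 1)) : Fin d := ⟨i.1 + 1, by omega⟩

lemma swPerm_eq (i : Fin (d - 1)) : swPerm d i = Equiv.swap (fa i) (fb i) := rfl

lemma fa_lt_fb (i : Fin (d - 1)) : fa (d := d) i < fb i := by
  simp [fa, fb, Fin.lt_def]

lemma reindex_mul (e : Equiv.Perm (Fin d)) (x y : TPow k F d) :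
    reindex k (fun _ => F) e (x * y)
      = reindex k (fun _ => F) e x * reindex k (fun _ => F) e y := by
  induction x using PiTensorProduct.induction_on with
  | smul_tprod r f =>
    induction y using PiTensorProduct.induction_on with
    | smul_tprod s g =>
      rw [smul_tprod_mul_smul_tprod, map_smul, map_smul, map_smul, reindex_tprod,
        reindex_tprod, reindex_tprod, smul_tprod_mul_smul_tprod]
      rfl
    | add u v hu hv => simp only [mul_add, map_add, hu, hv]
  | add u v hu hv => simp only [add_mul, map_add, hu, hv]

/-- `reindex` along a permutation, as a ring homomorphism of `F^{⊗d}`. -/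
noncomputable def rePerm (e : Equiv.Perm (Fin d)) : TPow k F d →+* TPow k F d where
  toFun := reindex k (fun _ => F) e
  map_one' := by rw [PiTensorProduct.one_def, reindex_tprod]; rfl
  map_mul' := reindex_mul e
  map_zero' := map_zero _
  map_add' := map_add _

lemma rePerm_apply (e : Equiv.Perm (Fin d)) (x : TPow k F d) :
    rePerm (k := k) (F := F) e x = reindex k (fun _ => F) e x := rfl

lemma sigmaI_eq (i : Fin (d - 1)) (x : TPow k F d) :
    sigmaI k F d i x = rePerm (swPerm d i) x := rfl

lemma rePerm_ins (e : Equiv.Perm (Fin d)) (j : Fin d) (a : F) :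
    rePerm (k := k) e (ins k F d j a) = ins k F d (e j) a := by
  show rePerm (k := k) e (tprod k (Function.update (fun _ => (1 : F)) j a)) = _
  rw [rePerm_apply, reindex_tprod]
  show _ = tprod k (Function.update (fun _ => (1 : F)) (e j) a)
  congr 1
  funext m
  simp only [Function.update_apply]
  by_cases h : m = e j
  · subst h; simp
  · rw [if_neg h, if_neg]
    intro hc
    exact h (by rw [← hc]; simp)

lemma place_tmul (i j : Fin d) (a b : F) :
    place k F d i j (a ⊗ₜ[k] b) = ins k F d i a * ins k F d j b := by
  simp [place, TensorProduct.lift.tmul, LinearMap.compl₁₂_apply, LinearMap.mul_apply']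

lemma rePerm_place (e : Equiv.Perm (Fin d)) (i j : Fin d) (β : F ⊗[k] F) :
    rePerm (k := k) e (place k F d i j β) = place k F d (e i) (e j) β := by
  induction β with
  | zero => simp
  | tmul a b => rw [place_tmul, place_tmul, _root_.map_mul, rePerm_ins, rePerm_ins]
  | add x y hx hy => rw [map_add, map_add, map_add, hx, hy]

lemma rePerm_rePerm (e : Equiv.Perm (Fin d)) (x : TPow k F d) :
    rePerm (k := k) (F := F) e (rePerm e.symm x) = x := by
  rw [rePerm_apply, rePerm_apply, ← PiTensorProduct.reindex_symm,
    LinearEquiv.apply_symm_apply]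

lemma rePerm_center (e : Equiv.Perm (Fin d)) {x : TPow k F d}
    (hx : x ∈ Subring.center (TPow k F d)) :
    rePerm (k := k) e x ∈ Subring.center (TPow k F d) := by
  rw [Subring.mem_center_iff] at hx ⊢
  intro g
  conv_lhs => rw [← rePerm_rePerm e g]
  rw [← _root_.map_mul, hx, _root_.map_mul, rePerm_rePerm]

/-- `rePerm` restricted to the center, as a monoid homomorphism. -/
noncomputable def cRe (e : Equiv.Perm (Fin d)) :
    Subring.center (TPow k F d) →* Subring.center (TPow k F d) where
  toFun x := ⟨rePerm (k := k) e x.1, rePerm_center e x.2⟩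
  map_one' := Subtype.ext (map_one (rePerm (k := k) (F := F) e))
  map_mul' x y := Subtype.ext (map_mul (rePerm (k := k) (F := F) e) x.1 y.1)

end AuxLemmas

section AuxLemmas2

variable {k F : Type*} [Field k] [Ring F] [Algebra k F] {d : ℕ}

open PiTensorProduct

lemma ins_apply (j : Fin d) (a : F) :
    ins k F d j a = tprod k (Function.update (fun _ => (1 : F)) j a) := rfl

lemma place_comm (α : F ⊗[k] F) (hα : ∀ z : F ⊗[k] F, α * z = z * α)
    {i j : Fin d} (hij : i ≠ j) (z : TPow k F d) :
    z * place k F d i j α = place k F d i j α * z := by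
  have key : ∀ f : Fin d → F,
      tprod k f * place k F d i j α = place k F d i j α * tprod k f := by
    intro f
    have L1 : ∀ β : F ⊗[k] F, tprod k f * place k F d i j β
        = tprod k (Function.update (Function.update f i (1 : F)) j 1) *
            place k F d i j ((f i ⊗ₜ[k] f j) * β) := by
      intro β
      induction β with
      | zero => simp
      | tmul a b =>
        rw [Algebra.TensorProduct.tmul_mul_tmul, place_tmul, place_tmul,
          ins_apply, ins_apply, ins_apply, ins_apply,
          tprod_mul_tprod, tprod_mul_tprod, tprod_mul_tprod, tprod_mul_tprod]
        congr 1
        funext m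
        by_cases hmi : m = i
        · subst hmi
          simp [Function.update_apply, hij]
        · by_cases hmj : m = j
          · subst hmj
            simp [Function.update_apply, Ne.symm hij, hmi]
          · simp [Function.update_apply, hmi, hmj]
      | add x y hx hy => simp only [mul_add, map_add, hx, hy]
    have L2 : ∀ β : F ⊗[k] F, place k F d i j β * tprod k f
        = tprod k (Function.update (Function.update f i (1 : F)) j 1) *
            place k F d i j (β * (f i ⊗ₜ[k] f j)) := by
      intro β
      induction β with
      | zero => simp
      | tmul a b =>
        rw [Algebra.TensorProduct.tmul_mul_tmul, place_tmul, place_tmul,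
          ins_apply, ins_apply, ins_apply, ins_apply,
          tprod_mul_tprod, tprod_mul_tprod, tprod_mul_tprod, tprod_mul_tprod]
        congr 1
        funext m
        by_cases hmi : m = i
        · subst hmi
          simp [Function.update_apply, hij]
        · by_cases hmj : m = j
          · subst hmj
            simp [Function.update_apply, Ne.symm hij, hmi]
          · simp [Function.update_apply, hmi, hmj]
      | add x y hx hy => simp only [add_mul, mul_add, map_add, hx, hy]
    rw [L1 α, L2 α, hα]
  induction z using PiTensorProduct.induction_on with
  | smul_tprod r f => rw [smul_mul_assoc, key f, mul_smul_comm]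
  | add x y hx hy => rw [add_mul, mul_add, hx, hy]

/-- The inversion set of a permutation. -/
def invSet (d : ℕ) (w : Equiv.Perm (Fin d)) : Finset (Fin d × Fin d) :=
  Finset.univ.filter fun p : Fin d × Fin d => p.1 < p.2 ∧ w p.2 < w p.1

lemma invCount_eq_card (w : Equiv.Perm (Fin d)) : invCount d w = (invSet d w).card := rfl

/-- The central factors `α_{i,j}` as elements of the center of `F^{⊗d}`. -/
noncomputable def ccD (α : F ⊗[k] F)
    (hc : ∀ p : Fin d × Fin d, p.1 < p.2 →
      place k F d p.1 p.2 α ∈ Subring.center (TPow k F d)) :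
    Fin d × Fin d → Subring.center (TPow k F d) :=
  fun p => if h : p.1 < p.2 then ⟨place k F d p.1 p.2 α, hc p h⟩ else 1

lemma alphaW_eq (α : F ⊗[k] F)
    (hc : ∀ p : Fin d × Fin d, p.1 < p.2 →
      place k F d p.1 p.2 α ∈ Subring.center (TPow k F d))
    (w : Equiv.Perm (Fin d)) :
    alphaW k F d α w = ((∏ p ∈ invSet d w, ccD α hc p : Subring.center (TPow k F d)) :
      TPow k F d) := by
  have step : (∏ p ∈ invSet d w, ccD α hc p)
      = ∏ i : Fin d, ∏ j : Fin d,
          (if i < j ∧ w j < w i then ccD α hc (i, j) else 1) := by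
    rw [invSet, Finset.prod_filter, Fintype.prod_prod_type]
  rw [step, alphaW]
  conv_rhs => rw [Fin.prod_univ_def]
  rw [SubmonoidClass.coe_list_prod, List.map_map]
  congr 1
  apply List.map_congr_left
  intro i _
  show _ = ((∏ j : Fin d, (if i < j ∧ w j < w i then ccD α hc (i, j) else 1) :
      Subring.center (TPow k F d)) : TPow k F d)
  conv_rhs => rw [Fin.prod_univ_def]
  rw [SubmonoidClass.coe_list_prod, List.map_map]
  congr 1
  apply List.map_congr_left
  intro j _
  show _ = ((if i < j ∧ w j < w i then ccD α hc (i, j) else 1 :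
      Subring.center (TPow k F d)) : TPow k F d)
  split_ifs with h
  · rw [ccD]
    simp only [dif_pos h.1]
  · rfl

end AuxLemmas2

section AuxLemmas3

variable {k F : Type*} [Field k] [Ring F] [Algebra k F] {d : ℕ}

lemma swPerm_val (i : Fin (d - 1)) (p : Fin d) :
    ((swPerm d i) p).1
      = if p.1 = i.1 then i.1 + 1 else if p.1 = i.1 + 1 then i.1 else p.1 := by
  rcases eq_or_ne p (fa i) with h | h
  · subst h
    rw [swPerm_eq, Equiv.swap_apply_left]
    simp [fa, fb]
  · rcases eq_or_ne p (fb i) with h2 | h2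
    · subst h2
      rw [swPerm_eq, Equiv.swap_apply_right]
      have : (fb (d := d) i).1 ≠ i.1 := by simp [fb]
      simp [fa, fb]
    · rw [swPerm_eq, Equiv.swap_apply_of_ne_of_ne h h2]
      have h' : p.1 ≠ i.1 := fun hc => h (Fin.ext hc)
      have h2' : p.1 ≠ i.1 + 1 := fun hc => h2 (Fin.ext hc)
      rw [if_neg h', if_neg h2']

lemma swPerm_lt {i : Fin (d - 1)} {p q : Fin d} (hpq : p < q)
    (hne : ¬(p = fa i ∧ q = fb i)) : swPerm d i p < swPerm d i q := by
  have hne' : ¬(p.1 = i.1 ∧ q.1 = i.1 + 1) := fun h => hne ⟨Fin.ext h.1, Fin.ext h.2⟩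
  have h1 := swPerm_val i p
  have h2 := swPerm_val i q
  rw [Fin.lt_def] at hpq ⊢
  rw [h1, h2]
  have hq := q.2
  have hp := p.2
  split_ifs <;> omega

lemma swPerm_invol (i : Fin (d - 1)) (p : Fin d) : swPerm d i (swPerm d i p) = p := by
  rw [swPerm_eq]; exact Equiv.swap_apply_self _ _ _

lemma swPerm_sq (i : Fin (d - 1)) : swPerm d i * swPerm d i = 1 := by
  rw [swPerm_eq]; exact Equiv.swap_mul_self _ _

lemma invSet_swap (w : Equiv.Perm (Fin d)) (i : Fin (d - 1)) (h : w (fb i) < w (fa i)) :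
    invSet d w = insert (fa i, fb i)
      ((invSet d (w * swPerm d i)).image fun p => (swPerm d i p.1, swPerm d i p.2)) := by
  ext ⟨p, q⟩
  simp only [invSet, Finset.mem_insert, Finset.mem_image, Finset.mem_filter, Finset.mem_univ,
    true_and, Prod.mk.injEq, Prod.exists]
  simp only [Equiv.Perm.mul_apply]
  constructor
  · rintro ⟨hpq, hw⟩
    by_cases hab : p = fa i ∧ q = fb i
    · exact Or.inl hab
    · refine Or.inr ⟨swPerm d i p, swPerm d i q, ⟨swPerm_lt hpq hab, ?_⟩,
        swPerm_invol i p, swPerm_invol i q⟩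
      rw [swPerm_invol, swPerm_invol]
      exact hw
  · rintro (⟨rfl, rfl⟩ | ⟨u, v, ⟨huv, hw'⟩, rfl, rfl⟩)
    · exact ⟨fa_lt_fb i, h⟩
    · have hne : ¬(u = fa i ∧ v = fb i) := by
        rintro ⟨rfl, rfl⟩
        rw [show swPerm d i (fa i) = fb i by rw [swPerm_eq]; exact Equiv.swap_apply_left _ _,
          show swPerm d i (fb i) = fa i by rw [swPerm_eq]; exact Equiv.swap_apply_right _ _]
          at hw'
        exact absurd hw' (not_lt.2 (le_of_lt h))
      exact ⟨swPerm_lt huv hne, hw'⟩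

lemma notmem_image_swap (w : Equiv.Perm (Fin d)) (i : Fin (d - 1)) :
    (fa i, fb i) ∉ (invSet d w).image fun p => (swPerm d i p.1, swPerm d i p.2) := by
  intro hmem
  obtain ⟨⟨u, v⟩, huv, heq⟩ := Finset.mem_image.1 hmem
  obtain ⟨h1, h2⟩ := Prod.mk.injEq .. ▸ heq

  have e1 : u = fb i := by
    have := congrArg (swPerm d i) h1
    rwa [swPerm_invol, show swPerm d i (fa i) = fb i by
      rw [swPerm_eq]; exact Equiv.swap_apply_left _ _] at this
  have e2 : v = fa i := by
    have := congrArg (swPerm d i) h2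
    rwa [swPerm_invol, show swPerm d i (fb i) = fa i by
      rw [swPerm_eq]; exact Equiv.swap_apply_right _ _] at this
  have : u < v := (Finset.mem_filter.1 huv).2.1
  rw [e1, e2] at this
  exact absurd this (not_lt.2 (le_of_lt (fa_lt_fb i)))

lemma swap_pair_injective (i : Fin (d - 1)) :
    Function.Injective fun p : Fin d × Fin d => (swPerm d i p.1, swPerm d i p.2) := by
  rintro ⟨a, b⟩ ⟨c, e⟩ h
  simp only [Prod.mk.injEq] at h
  exact Prod.ext ((swPerm d i).injective h.1) ((swPerm d i).injective h.2)

lemma invCount_swap (w : Equiv.Perm (Fin d)) (i : Fin (d - 1)) (h : w (fb i) < w (fa i)) :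
    invCount d w = invCount d (w * swPerm d i) + 1 := by
  rw [invCount_eq_card, invCount_eq_card, invSet_swap w i h,
    Finset.card_insert_of_notMem (notmem_image_swap _ i),
    Finset.card_image_of_injective _ (swap_pair_injective i)]

lemma invCount_one : invCount d 1 = 0 := by
  rw [invCount_eq_card, Finset.card_eq_zero, invSet, Finset.filter_eq_empty_iff]
  rintro ⟨p, q⟩ -
  simp only [Equiv.Perm.one_apply, not_and]
  exact fun h1 => not_lt.2 (le_of_lt h1)

lemma invCount_le (L : List (Fin (d - 1))) :
    invCount d (L.map (swPerm d)).prod ≤ L.length := by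
  induction L using List.reverseRecOn with
  | nil => simp [invCount_one]
  | append_singleton L i ih =>
    rw [List.map_append, List.prod_append, List.map_cons, List.map_nil, List.prod_cons,
      List.prod_nil, mul_one, List.length_append]
    set u := (L.map (swPerm d)).prod with hu
    by_cases hcase : (u * swPerm d i) (fb i) < (u * swPerm d i) (fa i)
    · have := invCount_swap (u * swPerm d i) i hcase
      rw [mul_assoc, swPerm_sq, mul_one] at this
      simp only [List.length_singleton]
      omega
    · have hfa : (u * swPerm d i) (fa i) = u (fb i) := by
        rw [Equiv.Perm.mul_apply, swPerm_eq, Equiv.swap_apply_left]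
      have hfb : (u * swPerm d i) (fb i) = u (fa i) := by
        rw [Equiv.Perm.mul_apply, swPerm_eq, Equiv.swap_apply_right]
      rw [hfa, hfb] at hcase
      have hne : u (fb i) ≠ u (fa i) := fun hc =>
        absurd (u.injective hc) (Fin.ne_of_gt (fa_lt_fb i))
      have hlt : u (fb i) < u (fa i) := lt_of_le_of_ne (not_lt.1 hcase) hne
      have := invCount_swap u i hlt
      simp only [List.length_singleton]
      omega

lemma invCount_inv (w : Equiv.Perm (Fin d)) :
    invCount d w⁻¹ = invCount d w := by
  rw [invCount_eq_card, invCount_eq_card]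
  refine Finset.card_nbij' (fun p => (w⁻¹ p.2, w⁻¹ p.1)) (fun p => (w p.2, w p.1))
    ?_ ?_ ?_ ?_ <;>
    rintro ⟨p, q⟩ hpq <;>
    simp only [invSet, Finset.mem_filter, Finset.mem_univ, true_and,
      Finset.mem_coe, Equiv.Perm.coe_inv, Equiv.apply_symm_apply, Equiv.symm_apply_apply] at hpq ⊢ <;>
    try exact ⟨hpq.2, hpq.1⟩

lemma prod_reverse_word (L : List (Fin (d - 1))) :
    ((L.reverse.map (swPerm d)).prod) = ((L.map (swPerm d)).prod)⁻¹ := by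
  induction L with
  | nil => simp
  | cons i L ih =>
    rw [List.reverse_cons, List.map_append, List.prod_append, ih, List.map_cons,
      List.map_nil, List.prod_cons, List.prod_nil, mul_one, List.map_cons, List.prod_cons,
      mul_inv_rev, swPerm_eq, Equiv.swap_inv, ← swPerm_eq]

end AuxLemmas3

section AuxLemmas4

variable {k F : Type*} [Field k] [Ring F] [Algebra k F] {d : ℕ}

open PiTensorProduct

/-- `σ_i` as a monoid homomorphism. -/
noncomputable def sigmaHom (i : Fin (d - 1)) : TPow k F d →* TPow k F d :=
  (rePerm (k := k) (F := F) (swPerm d i)).toMonoidHom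

lemma sigmaI_eq_hom (i : Fin (d - 1)) (x : TPow k F d) :
    sigmaI k F d i x = sigmaHom i x := rfl

lemma sigmaI_mul (i : Fin (d - 1)) (x y : TPow k F d) :
    sigmaI k F d i (x * y) = sigmaI k F d i x * sigmaI k F d i y := by
  rw [sigmaI_eq_hom, sigmaI_eq_hom, sigmaI_eq_hom, _root_.map_mul]

lemma sigmaI_one (i : Fin (d - 1)) : sigmaI k F d i (1 : TPow k F d) = 1 := by
  rw [sigmaI_eq_hom, _root_.map_one]

lemma alphaWordR_nil (α : F ⊗[k] F) : alphaWordR k F d α [] = 1 := by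
  simp [alphaWordR]

lemma alphaWordL_nil (α : F ⊗[k] F) : alphaWordL k F d α [] = 1 := by
  simp [alphaWordL]

lemma alphaWordR_cons (α : F ⊗[k] F) (i : Fin (d - 1)) (L : List (Fin (d - 1))) :
    alphaWordR k F d α (i :: L) = alphaWordR k F d α L *
      L.foldl (fun x j => sigmaI k F d j x) (place k F d (fa i) (fb i) α) := by
  rw [alphaWordR, alphaWordR]
  simp only [List.length_cons]
  rw [List.finRange_succ, List.reverse_cons, List.map_append, List.prod_append,
    ← List.map_reverse, List.map_map]
  congr 1 <;> (simp; try rfl)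

lemma alphaWordL_cons (α : F ⊗[k] F) (i : Fin (d - 1)) (L : List (Fin (d - 1))) :
    alphaWordL k F d α (i :: L) = place k F d (fa i) (fb i) α *
      sigmaI k F d i (alphaWordL k F d α L) := by
  rw [alphaWordL, alphaWordL]
  simp only [List.length_cons]
  rw [List.finRange_succ, List.map_cons, List.prod_cons, List.map_map]
  congr 1
  rw [sigmaI_eq_hom, map_list_prod (sigmaHom (k := k) (F := F) i), List.map_map]
  rfl

lemma alphaWordR_append (α : F ⊗[k] F) :
    ∀ (L : List (Fin (d - 1))) (i : Fin (d - 1)),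
      alphaWordR k F d α (L ++ [i]) = place k F d (fa i) (fb i) α *
        sigmaI k F d i (alphaWordR k F d α L)
  | [], i => by
    rw [List.nil_append, alphaWordR_cons, alphaWordR_nil, sigmaI_one, List.foldl_nil,
      one_mul, mul_one]
  | j :: L, i => by
    rw [List.cons_append, alphaWordR_cons, alphaWordR_append α L i, alphaWordR_cons,
      List.foldl_append, List.foldl_cons, List.foldl_nil, sigmaI_mul, mul_assoc]

lemma alphaWordL_eq_rev (α : F ⊗[k] F) :
    ∀ L : List (Fin (d - 1)), alphaWordL k F d α L = alphaWordR k F d α L.reverse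
  | [] => by rw [alphaWordL_nil, List.reverse_nil, alphaWordR_nil]
  | i :: L => by
    rw [alphaWordL_cons, alphaWordL_eq_rev α L, List.reverse_cons, alphaWordR_append]

end AuxLemmas4

section MainProof

variable {k F : Type*} [Field k] [Ring F] [Algebra k F] {d : ℕ}

open PiTensorProduct

lemma key_step (α : F ⊗[k] F)
    (hc : ∀ p : Fin d × Fin d, p.1 < p.2 →
      place k F d p.1 p.2 α ∈ Subring.center (TPow k F d))
    (w : Equiv.Perm (Fin d)) (i : Fin (d - 1)) (h : w (fb i) < w (fa i)) :
    alphaW k F d α w = place k F d (fa i) (fb i) α *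
      sigmaI k F d i (alphaW k F d α (w * swPerm d i)) := by
  rw [alphaW_eq α hc w, alphaW_eq α hc (w * swPerm d i), invSet_swap w i h,
    Finset.prod_insert (notmem_image_swap _ i),
    Finset.prod_image (fun x _ y _ hxy => swap_pair_injective i hxy)]
  rw [Subring.coe_mul]
  congr 1
  · rw [ccD, dif_pos (fa_lt_fb i)]
  · show _ = sigmaHom (k := k) (F := F) i _
    show _ = ((cRe (swPerm d i)
        (∏ q ∈ invSet d (w * swPerm d i), ccD α hc q) : Subring.center (TPow k F d)) :
      TPow k F d)
    rw [map_prod]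
    congr 1
    refine Finset.prod_congr rfl fun q hq => ?_
    obtain ⟨-, hq1, hq2⟩ := Finset.mem_filter.1 hq
    have hqne : ¬(q.1 = fa i ∧ q.2 = fb i) := by
      rintro ⟨e1, e2⟩
      rw [e1, e2] at hq2
      rw [Equiv.Perm.mul_apply, Equiv.Perm.mul_apply,
        show swPerm d i (fa i) = fb i by rw [swPerm_eq]; exact Equiv.swap_apply_left _ _,
        show swPerm d i (fb i) = fa i by rw [swPerm_eq]; exact Equiv.swap_apply_right _ _]
        at hq2
      exact absurd hq2 (not_lt.2 (le_of_lt h))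
    have hlt : swPerm d i q.1 < swPerm d i q.2 := swPerm_lt hq1 hqne
    apply Subtype.ext
    show (ccD α hc (swPerm d i q.1, swPerm d i q.2)).1
        = rePerm (k := k) (swPerm d i) (ccD α hc q).1
    simp only [ccD, dif_pos hlt, dif_pos hq1]
    rw [rePerm_place]

lemma invSet_one : invSet d (1 : Equiv.Perm (Fin d)) = ∅ := by
  rw [invSet, Finset.filter_eq_empty_iff]
  rintro ⟨p, q⟩ -
  simp only [Equiv.Perm.one_apply, not_and]
  exact fun h1 => not_lt.2 (le_of_lt h1)

lemma main_step (α : F ⊗[k] F)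
    (hc : ∀ p : Fin d × Fin d, p.1 < p.2 →
      place k F d p.1 p.2 α ∈ Subring.center (TPow k F d)) :
    ∀ (L : List (Fin (d - 1))) (w : Equiv.Perm (Fin d)), IsReducedWord d L w →
      alphaW k F d α w = alphaWordR k F d α L := by
  intro L
  induction L using List.reverseRecOn with
  | nil =>
    rintro w ⟨hprod, hlen⟩
    rw [List.map_nil, List.prod_nil] at hprod
    rw [← hprod, alphaWordR_nil, alphaW_eq α hc, invSet_one, Finset.prod_empty]
    rfl
  | append_singleton L i ih =>
    rintro w ⟨hprod, hlen⟩
    rw [List.map_append, List.prod_append, List.map_cons, List.map_nil, List.prod_cons,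
      List.prod_nil, mul_one] at hprod
    rw [List.length_append, List.length_singleton] at hlen
    set u := (L.map (swPerm d)).prod with hu
    have hws : w * swPerm d i = u := by
      rw [← hprod, mul_assoc, swPerm_sq, mul_one]
    have hab : w (fb i) < w (fa i) := by
      by_contra hcon
      have hne : w (fa i) ≠ w (fb i) := fun hc' =>
        absurd (w.injective hc') (Fin.ne_of_lt (fa_lt_fb i))
      have h2 : w (fa i) < w (fb i) := lt_of_le_of_ne (not_lt.1 hcon) hne
      have h3 : u (fb i) < u (fa i) := by
        rw [← hws, Equiv.Perm.mul_apply, Equiv.Perm.mul_apply,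
          show swPerm d i (fa i) = fb i by rw [swPerm_eq]; exact Equiv.swap_apply_left _ _,
          show swPerm d i (fb i) = fa i by rw [swPerm_eq]; exact Equiv.swap_apply_right _ _]
        exact h2
      have h4 := invCount_swap u i h3
      rw [show u * swPerm d i = w by rw [← hws, mul_assoc, swPerm_sq, mul_one]] at h4
      have h5 := invCount_le (d := d) L
      rw [← hu] at h5
      omega
    have hcnt := invCount_swap w i hab
    rw [hws] at hcnt
    have hred : IsReducedWord d L u := ⟨rfl, by omega⟩
    rw [key_step α hc w i hab, hws, ih u hred, alphaWordR_append]

end MainProof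

theorem stmt17 (hd : 1 ≤ d) (α : F ⊗[k] F)
    (hα : ∀ z : F ⊗[k] F, α * z = z * α) :
    -- each `α_{i,j}` is central in `F^{⊗d}` (so the product `α_w` is well-defined)
    (∀ i j : Fin d, i < j → ∀ z : TPow k F d,
        z * place k F d i j α = place k F d i j α * z) ∧
    -- the twisted ordered product formulas for `α_w` and `α_{w⁻¹}` along any
    -- reduced expression `w = s_{i₁}⋯s_{i_N}`
    (∀ (w : Equiv.Perm (Fin d)) (L : List (Fin (d - 1))), IsReducedWord d L w →
      alphaW k F d α w = alphaWordR k F d α L ∧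
      alphaW k F d α w⁻¹ = alphaWordL k F d α L) := by
  have hcent : ∀ i j : Fin d, i < j → ∀ z : TPow k F d,
      z * place k F d i j α = place k F d i j α * z :=
    fun i j hij z => place_comm α hα (ne_of_lt hij) z
  refine ⟨hcent, ?_⟩
  have hc : ∀ p : Fin d × Fin d, p.1 < p.2 →
      place k F d p.1 p.2 α ∈ Subring.center (TPow k F d) :=
    fun p hp => Subring.mem_center_iff.mpr (hcent p.1 p.2 hp)
  intro w L hred
  refine ⟨main_step α hc L w hred, ?_⟩
  have hrev : IsReducedWord d L.reverse w⁻¹ := by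
    obtain ⟨h1, h2⟩ := hred
    exact ⟨by rw [prod_reverse_word, h1], by rw [List.length_reverse, invCount_inv]; exact h2⟩
  rw [main_step α hc L.reverse w⁻¹ hrev, ← alphaWordL_eq_rev]
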